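/- Let W^L and W^R be bounded random variables on a probability space (Ω₀, 𝒜, P₀). On Ω = Ω₀^ℕ with the infinite product measure P = P₀^{⊗ℕ}, set Wᵢ^L(ω) = W^L(ωᵢ) and Wᵢ^R(ω) = W^R(ωᵢ) for i ≥ 1. A strategy s consists of s₁ ∈ {0,1} and Borel measurable maps σᵢ : ℝ^{i−1} → {0,1} for i ≥ 2; its rewards are defined recursively by Z₁^s = s₁W₁^L + (1−s₁)W₁^R and Zᵢ^s = sᵢWᵢ^L + (1−sᵢ)Wᵢ^R with sᵢ = σᵢ(Z₁^s,…,Z_{i−1}^s). Let 𝒫₀ be the set of Borel probability measures ν on ℝ with ∫ φ dν ≤ max(E[φ(W^L)], E[φ(W^R)]) for all Lipschitz φ : ℝ → ℝ, and let 𝒫 be the kernel-generated set over 𝒫₀ on (ℝ^ℕ, ℬ(ℝ^ℕ)). Then for every n ≥ 1 and every bounded Borel measurable f : ℝⁿ → ℝ, sup over all strategies s of E_P[f(Z₁^s,…,Zₙ^s)] equals sup_{Q∈𝒫} E_Q[f(X₁,…,Xₙ)], and this supremum over strategies is attained. -/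

import Mathlib

/-!
Write `μ_L`, `μ_R` for the laws of `W^L`, `W^R`. Both suprema equal the value `V_n f` of the
dynamic program `g ↦ (x ↦ max (∫ g (x, y) dμ_L(y)) (∫ g (x, y) dμ_R(y)))` iterated backwards from
`f`. Lipschitz functions are dense in `L¹(ν + μ_L + μ_R)`, so a law `ν ∈ 𝒫₀` integrates every
bounded Borel function to at most the better of the two arms; backward induction along the kernels
then gives `E_Q f ≤ V_n f` for every `Q ∈ 𝒫`. Conversely, under any strategy the conditional law of
the next reward is `μ_L` or `μ_R`, so the law of the reward process lies in `𝒫`, and the strategy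
that always plays the arm with the larger continuation value attains `V_n f`.
-/

open MeasureTheory ProbabilityTheory Filter
open scoped ENNReal NNReal

noncomputable section

/-- The set of finite-dimensional laws on `Fin n → ℝ` built from an initial law and
probability kernels whose values lie in the prescribed sets `𝒫seq i` (the set of
possible conditional laws for the `i`-th coordinate, `0`-indexed). -/
def admissibleLaws (𝒫seq : ℕ → Set (Measure ℝ)) : (n : ℕ) → Set (Measure (Fin n → ℝ))
  | 0 => {Measure.dirac (fun i => i.elim0)}
  | n + 1 =>
    { ν | ∃ μ ∈ admissibleLaws 𝒫seq n, ∃ κ : Kernel (Fin n → ℝ) ℝ,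
        IsMarkovKernel κ ∧ (∀ x, κ x ∈ 𝒫seq n) ∧
        ν = (μ.compProd κ).map (fun p => Fin.snoc p.1 p.2) }

/-- The kernel-generated set of probability measures on the canonical space `ℝ^ℕ`:
all probability measures whose finite-dimensional marginals are obtained by iterated
integration of probability kernels taking values in `𝒫seq i`. -/
def kernelSet (𝒫seq : ℕ → Set (Measure ℝ)) : Set (Measure (ℕ → ℝ)) :=
  { P | IsProbabilityMeasure P ∧
      ∀ n : ℕ, P.map (fun ω (i : Fin n) => ω i) ∈ admissibleLaws 𝒫seq n }

/-- Canonical filtration on `ℝ^ℕ`: `canFilt i` is the σ-algebra generated by the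
first `i` coordinates `X₀, …, X_{i−1}`. -/
def canFilt (i : ℕ) : MeasurableSpace (ℕ → ℝ) :=
  MeasurableSpace.comap (fun ω (j : Fin i) => ω j) inferInstance

end

/-- Rewards of a strategy in the two-armed bandit: at round `i` the strategy looks at the
previous rewards and chooses arm L (`true`) or arm R (`false`). -/
noncomputable def banditReward {Ω₀ : Type*} (WL WR : Ω₀ → ℝ)
    (σ : (i : ℕ) → (Fin i → ℝ) → Bool) (ω : ℕ → Ω₀) : ℕ → ℝ
  | i =>
    if σ i (fun j : Fin i => banditReward WL WR σ ω j) then WL (ω i) else WR (ω i)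
  decreasing_by all_goals exact j.2

lemma Measurable.integrable_of_abs_le {α : Type*} [MeasurableSpace α] {μ : Measure α}
    [IsFiniteMeasure μ] {g : α → ℝ} (hg : Measurable g) {C : ℝ} (hgC : ∀ x, |g x| ≤ C) :
    Integrable g μ :=
  .of_bound hg.aestronglyMeasurable C (ae_of_all _ fun x => (Real.norm_eq_abs _).trans_le (hgC x))

lemma abs_integral_le_of_abs_le {α : Type*} [MeasurableSpace α] {μ : Measure α}
    [IsProbabilityMeasure μ] {g : α → ℝ} {C : ℝ} (hgC : ∀ x, |g x| ≤ C) :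
    |∫ x, g x ∂μ| ≤ C := by
  simpa using norm_integral_le_of_norm_le_const (μ := μ)
    (ae_of_all _ fun x => (Real.norm_eq_abs (g x)).trans_le (hgC x))

lemma abs_integral_sub_integral_le_of_le {α : Type*} [MeasurableSpace α] {m μ : Measure α}
    (hμ : μ ≤ m) {g ψ : α → ℝ} (hg : Integrable g m) (hψ : Integrable ψ m) :
    |∫ x, g x ∂μ - ∫ x, ψ x ∂μ| ≤ ∫ x, ‖g x - ψ x‖ ∂m := by
  rw [← integral_sub (hg.mono_measure hμ) (hψ.mono_measure hμ)]
  exact abs_integral_le_integral_abs.trans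
    (integral_mono_measure hμ (ae_of_all _ fun _ => abs_nonneg _) (hg.sub hψ).norm)

section LipschitzApproximation

variable {G E : Type*} [NormedAddCommGroup G] [NormedSpace ℝ G] [FiniteDimensional ℝ G]
  [MeasurableSpace G] [BorelSpace G] [NormedAddCommGroup E] [NormedSpace ℝ E] [CompleteSpace E]

/-- Mollify `g` with a bump function supported in a ball on which `g` oscillates by at most `η`. -/
theorem HasCompactSupport.exists_lipschitzWith_dist_le {g : G → E} (hg : HasCompactSupport g)
    (hgc : Continuous g) {η : ℝ} (hη : 0 < η) :
    ∃ ψ : G → E, HasCompactSupport ψ ∧ (∃ L, LipschitzWith L ψ) ∧ ∀ x, dist (ψ x) (g x) ≤ η := by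
  obtain ⟨δ, hδ, hgδ⟩ := Metric.uniformContinuous_iff.1
    (hg.uniformContinuous_of_continuous hgc) η hη
  let φ : ContDiffBump (0 : G) := ⟨δ / 2, δ, half_pos hδ, half_lt_self hδ⟩
  let μ : Measure G := Measure.addHaar
  let ψ := convolution (φ.normed μ) g (ContinuousLinearMap.lsmul ℝ ℝ) μ
  have hψ : HasCompactSupport ψ := φ.hasCompactSupport_normed.convolution _ hg
  refine ⟨ψ, hψ, ContDiff.lipschitzWith_of_hasCompactSupport hψ
    (φ.hasCompactSupport_normed.contDiff_convolution_left _ (n := ⊤) φ.contDiff_normed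
      hgc.locallyIntegrable) (by simp), fun x => ?_⟩
  exact φ.dist_normed_convolution_le hgc.aestronglyMeasurable fun y hy =>
    (hgδ (Metric.mem_ball.1 hy)).le

theorem MeasureTheory.Integrable.exists_lipschitzWith_integral_norm_sub_le {m : Measure G}
    [IsFiniteMeasure m] {f : G → E} (hf : Integrable f m) {ε : ℝ} (hε : 0 < ε) :
    ∃ ψ : G → E, (∃ L, LipschitzWith L ψ) ∧ Integrable ψ m ∧ ∫ x, ‖f x - ψ x‖ ∂m ≤ ε := by
  obtain ⟨g, hgs, hfg, hgc, hgi⟩ := hf.exists_hasCompactSupport_integral_sub_le (half_pos hε)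
  set η := ε / 2 / (m.real Set.univ + 1)
  obtain ⟨ψ, hψs, ⟨L, hψ⟩, hψg⟩ := hgs.exists_lipschitzWith_dist_le hgc (by positivity : 0 < η)
  have hψi : Integrable ψ m := hψ.continuous.integrable_of_hasCompactSupport hψs
  refine ⟨ψ, ⟨L, hψ⟩, hψi, ?_⟩
  have hgψ : ∫ x, ‖g x - ψ x‖ ∂m ≤ ε / 2 :=
    calc ∫ x, ‖g x - ψ x‖ ∂m ≤ ∫ _, η ∂m :=
          integral_mono (hgi.sub hψi).norm (integrable_const η)
            fun x => by rw [← dist_eq_norm, dist_comm]; exact hψg x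
      _ = ε / 2 * (m.real Set.univ / (m.real Set.univ + 1)) := by
          rw [integral_const, smul_eq_mul]; ring
      _ ≤ ε / 2 := mul_le_of_le_one_right (by positivity)
          ((div_le_one (by positivity)).2 (by linarith))
  calc ∫ x, ‖f x - ψ x‖ ∂m ≤ ∫ x, (‖f x - g x‖ + ‖g x - ψ x‖) ∂m :=
        integral_mono (hf.sub hψi).norm ((hf.sub hgi).norm.add (hgi.sub hψi).norm)
          fun x => norm_sub_le_norm_sub_add_norm_sub _ _ _
    _ = ∫ x, ‖f x - g x‖ ∂m + ∫ x, ‖g x - ψ x‖ ∂m :=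
        integral_add (hf.sub hgi).norm (hgi.sub hψi).norm
    _ ≤ ε := by linarith

/-- Approximate `g` in `L¹(ν + μ₁ + μ₂)` by a Lipschitz `ψ` and transfer the inequality. -/
theorem integral_le_max_of_forall_lipschitzWith {ν μ₁ μ₂ : Measure G} [IsFiniteMeasure ν]
    [IsFiniteMeasure μ₁] [IsFiniteMeasure μ₂]
    (h : ∀ φ : G → ℝ, (∃ L, LipschitzWith L φ) →
      ∫ x, φ x ∂ν ≤ max (∫ x, φ x ∂μ₁) (∫ x, φ x ∂μ₂))
    {g : G → ℝ} (hg : Integrable g (ν + μ₁ + μ₂)) :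
    ∫ x, g x ∂ν ≤ max (∫ x, g x ∂μ₁) (∫ x, g x ∂μ₂) := by
  refine le_of_forall_pos_le_add fun ε hε => ?_
  obtain ⟨ψ, hψL, hψ, hgψ⟩ := hg.exists_lipschitzWith_integral_norm_sub_le (half_pos hε)
  have hν := abs_le.1 ((abs_integral_sub_integral_le_of_le
    (Measure.le_add_right (Measure.le_add_right le_rfl)) hg hψ).trans hgψ)
  have h₁ := abs_le.1 ((abs_integral_sub_integral_le_of_le
    (Measure.le_add_right (Measure.le_add_left le_rfl)) hg hψ).trans hgψ)
  have h₂ := abs_le.1 ((abs_integral_sub_integral_le_of_le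
    (Measure.le_add_left le_rfl) hg hψ).trans hgψ)
  have hmax : max (∫ x, ψ x ∂μ₁) (∫ x, ψ x ∂μ₂) ≤ max (∫ x, g x ∂μ₁) (∫ x, g x ∂μ₂) + ε / 2 :=
    max_le (by linarith [le_max_left (∫ x, g x ∂μ₁) (∫ x, g x ∂μ₂)])
      (by linarith [le_max_right (∫ x, g x ∂μ₁) (∫ x, g x ∂μ₂)])
  linarith [h ψ hψL]

end LipschitzApproximation

/-- The set `𝒫₀` of the statement, for arms with reward laws `μ₁` and `μ₂`. -/
def lipschitzDominated (μ₁ μ₂ : Measure ℝ) : Set (Measure ℝ) :=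
  { ν | IsProbabilityMeasure ν ∧ ∀ φ : ℝ → ℝ, (∃ L : ℝ≥0, LipschitzWith L φ) →
      ∫ x, φ x ∂ν ≤ max (∫ x, φ x ∂μ₁) (∫ x, φ x ∂μ₂) }

section LipschitzDominated

variable {μ₁ μ₂ : Measure ℝ}

lemma left_mem_lipschitzDominated [IsProbabilityMeasure μ₁] : μ₁ ∈ lipschitzDominated μ₁ μ₂ :=
  ⟨inferInstance, fun _ _ => le_max_left _ _⟩

lemma right_mem_lipschitzDominated [IsProbabilityMeasure μ₂] : μ₂ ∈ lipschitzDominated μ₁ μ₂ :=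
  ⟨inferInstance, fun _ _ => le_max_right _ _⟩

lemma integral_le_max_of_mem_lipschitzDominated [IsFiniteMeasure μ₁] [IsFiniteMeasure μ₂]
    {ν : Measure ℝ} (hν : ν ∈ lipschitzDominated μ₁ μ₂) {g : ℝ → ℝ} (hg : Measurable g) {C : ℝ}
    (hgC : ∀ x, |g x| ≤ C) :
    ∫ x, g x ∂ν ≤ max (∫ x, g x ∂μ₁) (∫ x, g x ∂μ₂) :=
  have := hν.1
  integral_le_max_of_forall_lipschitzWith hν.2 (hg.integrable_of_abs_le hgC)

lemma setOf_lipschitz_integral_comp_le_max_eq {Ω₀ : Type*} [MeasurableSpace Ω₀] (P₀ : Measure Ω₀)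
    {WL WR : Ω₀ → ℝ} (hWL : Measurable WL) (hWR : Measurable WR) :
    { ν : Measure ℝ | IsProbabilityMeasure ν ∧
      ∀ φ : ℝ → ℝ, (∃ L : ℝ≥0, LipschitzWith L φ) →
        ∫ x, φ x ∂ν ≤ max (∫ ω, φ (WL ω) ∂P₀) (∫ ω, φ (WR ω) ∂P₀) } =
      lipschitzDominated (P₀.map WL) (P₀.map WR) := by
  ext ν
  refine and_congr_right fun _ => forall_congr' fun φ => forall_congr' fun ⟨L, hφ⟩ => ?_
  rw [integral_map hWL.aemeasurable hφ.continuous.aestronglyMeasurable,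
    integral_map hWR.aemeasurable hφ.continuous.aestronglyMeasurable]

end LipschitzDominated

section Snoc

variable {γ : Type*} [MeasurableSpace γ]

lemma measurable_finSnoc (k : ℕ) :
    Measurable fun p : (Fin k → γ) × γ => (Fin.snoc p.1 p.2 : Fin (k + 1) → γ) := by
  refine measurable_pi_lambda _ fun i => Fin.lastCases ?_ (fun j => ?_) i
  · simpa only [Fin.snoc_last] using measurable_snd
  · simp only [Fin.snoc_castSucc]
    exact measurable_fst.eval

lemma measurable_finInit (k : ℕ) : Measurable fun w : Fin (k + 1) → γ => Fin.init w :=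
  measurable_pi_lambda _ fun _ => measurable_pi_apply _

lemma pi_succ_eq_map_snoc (Q : Measure γ) [SigmaFinite Q] (k : ℕ) :
    Measure.pi (fun _ : Fin (k + 1) => Q) =
      ((Measure.pi fun _ : Fin k => Q).prod Q).map fun p => Fin.snoc p.1 p.2 := by
  have hsnoc : (fun p : (Fin k → γ) × γ => (Fin.snoc p.1 p.2 : Fin (k + 1) → γ)) =
      (MeasurableEquiv.piFinSuccAbove (fun _ => γ) (Fin.last k)).symm ∘ Prod.swap := by
    funext p
    simp [MeasurableEquiv.piFinSuccAbove, Fin.insertNthEquiv_last]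
    rfl
  rw [hsnoc, ← Measure.map_map (MeasurableEquiv.measurable _) measurable_swap, Measure.prod_swap,
    (measurePreserving_piFinSuccAbove (fun _ => Q) (Fin.last k)).symm.map_eq]

end Snoc

lemma integral_map_snoc_compProd {k : ℕ} {μ : Measure (Fin k → ℝ)} [IsFiniteMeasure μ]
    {κ : Kernel (Fin k → ℝ) ℝ} [IsMarkovKernel κ] {g : (Fin (k + 1) → ℝ) → ℝ} (hg : Measurable g)
    {C : ℝ} (hgC : ∀ x, |g x| ≤ C) :
    ∫ x, g x ∂(μ ⊗ₘ κ).map (fun p => Fin.snoc p.1 p.2) = ∫ x, ∫ y, g (Fin.snoc x y) ∂κ x ∂μ := by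
  have hint : Integrable (fun p : (Fin k → ℝ) × ℝ => g (Fin.snoc p.1 p.2)) (μ ⊗ₘ κ) :=
    (hg.comp (measurable_finSnoc k)).integrable_of_abs_le fun _ => hgC _
  rw [integral_map (measurable_finSnoc k).aemeasurable hg.aestronglyMeasurable,
    Measure.integral_compProd hint]

lemma isProbabilityMeasure_of_mem_admissibleLaws {𝒫seq : ℕ → Set (Measure ℝ)} :
    ∀ {k : ℕ} {μ : Measure (Fin k → ℝ)}, μ ∈ admissibleLaws 𝒫seq k → IsProbabilityMeasure μ
  | 0, _, rfl => inferInstance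
  | k + 1, _, ⟨μ, hμ, κ, _, _, hν⟩ => by
    have := isProbabilityMeasure_of_mem_admissibleLaws hμ
    exact hν ▸ Measure.isProbabilityMeasure_map (measurable_finSnoc k).aemeasurable

noncomputable def bellmanStep (μ₁ μ₂ : Measure ℝ) {k : ℕ} (g : (Fin (k + 1) → ℝ) → ℝ)
    (x : Fin k → ℝ) : ℝ :=
  max (∫ y, g (Fin.snoc x y) ∂μ₁) (∫ y, g (Fin.snoc x y) ∂μ₂)

/-- The optimal expectation of the payoff `g` over `k` rounds, by backward induction. -/
noncomputable def bellmanValue (μ₁ μ₂ : Measure ℝ) : (k : ℕ) → ((Fin k → ℝ) → ℝ) → ℝ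
  | 0, g => g Fin.elim0
  | k + 1, g => bellmanValue μ₁ μ₂ k (bellmanStep μ₁ μ₂ g)

noncomputable def greedyArm (μ₁ μ₂ : Measure ℝ) {k : ℕ} (g : (Fin (k + 1) → ℝ) → ℝ)
    (x : Fin k → ℝ) : Bool :=
  decide (∫ y, g (Fin.snoc x y) ∂μ₂ ≤ ∫ y, g (Fin.snoc x y) ∂μ₁)

section Bellman

variable {μ₁ μ₂ : Measure ℝ} {k : ℕ} {g : (Fin (k + 1) → ℝ) → ℝ}

lemma measurable_integral_snoc [SFinite μ₁] (hg : Measurable g) :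
    Measurable fun x : Fin k → ℝ => ∫ y, g (Fin.snoc x y) ∂μ₁ :=
  (hg.comp (measurable_finSnoc k)).stronglyMeasurable.integral_prod_right'.measurable

lemma measurable_bellmanStep [SFinite μ₁] [SFinite μ₂] (hg : Measurable g) :
    Measurable (bellmanStep μ₁ μ₂ g) :=
  (measurable_integral_snoc hg).max (measurable_integral_snoc hg)

lemma measurable_greedyArm [SFinite μ₁] [SFinite μ₂] (hg : Measurable g) :
    Measurable (greedyArm μ₁ μ₂ g) :=
  Measurable.ite (measurableSet_le (measurable_integral_snoc hg) (measurable_integral_snoc hg))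
    measurable_const measurable_const

lemma ite_greedyArm_eq_bellmanStep (x : Fin k → ℝ) :
    (if greedyArm μ₁ μ₂ g x then ∫ y, g (Fin.snoc x y) ∂μ₁ else ∫ y, g (Fin.snoc x y) ∂μ₂) =
      bellmanStep μ₁ μ₂ g x := by
  simp only [greedyArm, bellmanStep, decide_eq_true_eq, max_def']

lemma abs_bellmanStep_le [IsProbabilityMeasure μ₁] [IsProbabilityMeasure μ₂] {C : ℝ}
    (hgC : ∀ x, |g x| ≤ C) (x : Fin k → ℝ) : |bellmanStep μ₁ μ₂ g x| ≤ C :=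
  abs_max_le_max_abs_abs.trans
    (max_le (abs_integral_le_of_abs_le fun _ => hgC _) (abs_integral_le_of_abs_le fun _ => hgC _))

end Bellman

theorem integral_le_bellmanValue {μ₁ μ₂ : Measure ℝ} [IsProbabilityMeasure μ₁]
    [IsProbabilityMeasure μ₂] :
    ∀ {k : ℕ} {μ : Measure (Fin k → ℝ)}, μ ∈ admissibleLaws (fun _ => lipschitzDominated μ₁ μ₂) k →
      ∀ {g : (Fin k → ℝ) → ℝ}, Measurable g → ∀ {C : ℝ}, (∀ x, |g x| ≤ C) →
        ∫ x, g x ∂μ ≤ bellmanValue μ₁ μ₂ k g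
  | 0, _, rfl, g, hg, _, _ => by
    rw [integral_dirac' _ _ hg.stronglyMeasurable]; rfl
  | k + 1, _, ⟨μ, hμ, κ, _, hκ, rfl⟩, g, hg, C, hgC => by
    have := isProbabilityMeasure_of_mem_admissibleLaws hμ
    have hslice : ∀ x, Measurable fun y => g (Fin.snoc x y) := fun x =>
      hg.comp ((measurable_finSnoc k).comp (measurable_const.prodMk measurable_id))
    calc ∫ x, g x ∂(μ ⊗ₘ κ).map (fun p => Fin.snoc p.1 p.2)
        = ∫ x, ∫ y, g (Fin.snoc x y) ∂κ x ∂μ := integral_map_snoc_compProd hg hgC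
      _ ≤ ∫ x, bellmanStep μ₁ μ₂ g x ∂μ :=
          integral_mono
            ((hg.comp (measurable_finSnoc k)).stronglyMeasurable.integral_kernel_prod_right'
              |>.measurable.integrable_of_abs_le fun x => abs_integral_le_of_abs_le fun _ => hgC _)
            ((measurable_bellmanStep hg).integrable_of_abs_le (abs_bellmanStep_le hgC))
            fun x => integral_le_max_of_mem_lipschitzDominated (hκ x) (hslice x) fun _ => hgC _
      _ ≤ bellmanValue μ₁ μ₂ k (bellmanStep μ₁ μ₂ g) :=
          integral_le_bellmanValue hμ (measurable_bellmanStep hg) (abs_bellmanStep_le hgC)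

lemma measurable_prod_ite {β Ω₀ : Type*} [MeasurableSpace β] [MeasurableSpace Ω₀] {c : β → Bool}
    (hc : Measurable c) {WL WR : Ω₀ → ℝ} (hWL : Measurable WL) (hWR : Measurable WR) :
    Measurable fun p : β × Ω₀ => (p.1, if c p.1 then WL p.2 else WR p.2) :=
  measurable_fst.prodMk (Measurable.ite (measurable_fst (hc (measurableSet_singleton true)))
    (hWL.comp measurable_snd) (hWR.comp measurable_snd))

noncomputable def armKernel {β : Type*} [MeasurableSpace β] (μ₁ μ₂ : Measure ℝ) (c : β → Bool)
    (hc : Measurable c) : Kernel β ℝ :=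
  Kernel.piecewise (measurableSet_eq_fun hc (measurable_const (a := true)))
    (Kernel.const β μ₁) (Kernel.const β μ₂)

section ArmKernel

variable {β : Type*} [MeasurableSpace β] {μ₁ μ₂ : Measure ℝ} {c : β → Bool} (hc : Measurable c)

lemma armKernel_apply (x : β) : armKernel μ₁ μ₂ c hc x = if c x then μ₁ else μ₂ := by
  rw [armKernel, Kernel.piecewise_apply]
  rfl

instance [IsProbabilityMeasure μ₁] [IsProbabilityMeasure μ₂] :
    IsMarkovKernel (armKernel μ₁ μ₂ c hc) := by
  unfold armKernel; infer_instance

instance [SFinite μ₁] [SFinite μ₂] : IsSFiniteKernel (armKernel μ₁ μ₂ c hc) := by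
  unfold armKernel; infer_instance

lemma armKernel_apply_mem_lipschitzDominated [IsProbabilityMeasure μ₁] [IsProbabilityMeasure μ₂]
    (x : β) : armKernel μ₁ μ₂ c hc x ∈ lipschitzDominated μ₁ μ₂ := by
  rw [armKernel_apply]
  split
  exacts [left_mem_lipschitzDominated, right_mem_lipschitzDominated]

lemma map_prod_ite_eq_compProd_armKernel {Ω₀ : Type*} [MeasurableSpace Ω₀] (ν : Measure β)
    [SFinite ν] (Q : Measure Ω₀) [IsFiniteMeasure Q] {WL WR : Ω₀ → ℝ} (hWL : Measurable WL)
    (hWR : Measurable WR) :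
    (ν.prod Q).map (fun p => (p.1, if c p.1 then WL p.2 else WR p.2)) =
      ν ⊗ₘ armKernel (Q.map WL) (Q.map WR) c hc := by
  have hG := measurable_prod_ite hc hWL hWR
  ext s hs
  rw [Measure.map_apply hG hs, Measure.prod_apply (hG hs), Measure.compProd_apply hs]
  refine lintegral_congr fun x => ?_
  rw [armKernel_apply]
  split_ifs with h
  · rw [Measure.map_apply hWL (measurable_prodMk_left hs)]; simp [Set.preimage, h]
  · rw [Measure.map_apply hWR (measurable_prodMk_left hs)]; simp [Set.preimage, h]

end ArmKernel

def banditRewardFin {Ω₀ : Type*} (WL WR : Ω₀ → ℝ) (σ : (i : ℕ) → (Fin i → ℝ) → Bool) :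
    (k : ℕ) → (Fin k → Ω₀) → Fin k → ℝ
  | 0, _ => Fin.elim0
  | k + 1, w =>
    Fin.snoc (banditRewardFin WL WR σ k (Fin.init w))
      (if σ k (banditRewardFin WL WR σ k (Fin.init w)) then WL (w (Fin.last k))
        else WR (w (Fin.last k)))

section BanditRewardFin

variable {Ω₀ : Type*} {WL WR : Ω₀ → ℝ} {σ : (i : ℕ) → (Fin i → ℝ) → Bool}

lemma banditRewardFin_snoc {k : ℕ} (w : Fin k → Ω₀) (a : Ω₀) :
    banditRewardFin WL WR σ (k + 1) (Fin.snoc w a) =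
      Fin.snoc (banditRewardFin WL WR σ k w)
        (if σ k (banditRewardFin WL WR σ k w) then WL a else WR a) := by
  simp [banditRewardFin]

lemma banditReward_eq_banditRewardFin (ω : ℕ → Ω₀) :
    ∀ k : ℕ, (fun i : Fin k => banditReward WL WR σ ω i) =
      banditRewardFin WL WR σ k (fun i => ω i)
  | 0 => funext fun i => i.elim0
  | k + 1 => by
    have hω : (fun i : Fin (k + 1) => ω i) = Fin.snoc (fun i : Fin k => ω i) (ω k) := by
      funext i; refine Fin.lastCases ?_ (fun j => ?_) i <;> simp
    rw [hω, banditRewardFin_snoc, ← banditReward_eq_banditRewardFin ω k]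
    funext i
    refine Fin.lastCases ?_ (fun j => ?_) i
    · rw [Fin.snoc_last, banditReward]
      rfl
    · simp

lemma banditRewardFin_congr {σ' : (i : ℕ) → (Fin i → ℝ) → Bool} :
    ∀ {k : ℕ}, (∀ j < k, σ j = σ' j) → banditRewardFin WL WR σ k = banditRewardFin WL WR σ' k
  | 0, _ => rfl
  | k + 1, h => by
    funext w
    simp only [banditRewardFin]
    rw [banditRewardFin_congr fun j hj => h j (by omega), h k (by omega)]

variable [MeasurableSpace Ω₀]

lemma measurable_banditRewardFin (hWL : Measurable WL) (hWR : Measurable WR)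
    (hσ : ∀ i, Measurable (σ i)) : ∀ k, Measurable (banditRewardFin WL WR σ k)
  | 0 => measurable_of_subsingleton_codomain _
  | k + 1 => by
    have hR := (measurable_banditRewardFin hWL hWR hσ k).comp (measurable_finInit k)
    exact (measurable_finSnoc k).comp (hR.prodMk (Measurable.ite
      ((hσ k).comp hR (measurableSet_singleton true))
      (hWL.comp (measurable_pi_apply _)) (hWR.comp (measurable_pi_apply _))))

lemma measurable_banditReward (hWL : Measurable WL) (hWR : Measurable WR)
    (hσ : ∀ i, Measurable (σ i)) : Measurable fun ω i => banditReward WL WR σ ω i := by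
  refine measurable_pi_lambda _ fun i => ?_
  have := (measurable_pi_apply ⟨i, i.lt_succ_self⟩).comp
    ((measurable_banditRewardFin hWL hWR hσ (i + 1)).comp
      (measurable_pi_lambda (fun (ω : ℕ → Ω₀) (j : Fin (i + 1)) => ω j)
        fun _ => measurable_pi_apply _))
  simpa [Function.comp_def, ← banditReward_eq_banditRewardFin] using this

end BanditRewardFin

noncomputable def rewardLaw {Ω₀ : Type*} [MeasurableSpace Ω₀] (P₀ : Measure Ω₀)
    (WL WR : Ω₀ → ℝ) (σ : (i : ℕ) → (Fin i → ℝ) → Bool) (k : ℕ) : Measure (Fin k → ℝ) :=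
  (Measure.pi fun _ : Fin k => P₀).map (banditRewardFin WL WR σ k)

section RewardLaw

variable {Ω₀ : Type*} [MeasurableSpace Ω₀] (P₀ : Measure Ω₀) {WL WR : Ω₀ → ℝ}
  {σ : (i : ℕ) → (Fin i → ℝ) → Bool}

lemma rewardLaw_zero : rewardLaw P₀ WL WR σ 0 = Measure.dirac Fin.elim0 := by
  rw [rewardLaw, Measure.pi_of_empty, Measure.map_dirac' (measurable_of_subsingleton_codomain _)]
  exact congrArg _ (Subsingleton.elim _ _)

lemma rewardLaw_congr {σ' : (i : ℕ) → (Fin i → ℝ) → Bool} {k : ℕ} (h : ∀ j < k, σ j = σ' j) :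
    rewardLaw P₀ WL WR σ k = rewardLaw P₀ WL WR σ' k := by
  rw [rewardLaw, rewardLaw, banditRewardFin_congr h]

lemma map_banditReward_eq_rewardLaw {P : Measure (ℕ → Ω₀)}
    (hP : ∀ n : ℕ, P.map (fun ω (i : Fin n) => ω i) = Measure.pi (fun _ : Fin n => P₀))
    (hWL : Measurable WL) (hWR : Measurable WR) (hσ : ∀ i, Measurable (σ i)) (k : ℕ) :
    P.map (fun ω (i : Fin k) => banditReward WL WR σ ω i) = rewardLaw P₀ WL WR σ k := by
  have hfun : (fun ω (i : Fin k) => banditReward WL WR σ ω i) =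
      banditRewardFin WL WR σ k ∘ fun ω (i : Fin k) => ω i :=
    funext fun ω => banditReward_eq_banditRewardFin ω k
  rw [hfun, ← Measure.map_map (measurable_banditRewardFin hWL hWR hσ k)
    (measurable_pi_lambda _ fun _ => measurable_pi_apply _), hP, rewardLaw]

lemma integral_banditReward_eq_integral_rewardLaw {P : Measure (ℕ → Ω₀)}
    (hP : ∀ n : ℕ, P.map (fun ω (i : Fin n) => ω i) = Measure.pi (fun _ : Fin n => P₀))
    (hWL : Measurable WL) (hWR : Measurable WR) (hσ : ∀ i, Measurable (σ i)) {k : ℕ}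
    {g : (Fin k → ℝ) → ℝ} (hg : Measurable g) :
    ∫ ω, g (fun i : Fin k => banditReward WL WR σ ω i) ∂P = ∫ x, g x ∂rewardLaw P₀ WL WR σ k := by
  have hZ : Measurable fun ω (i : Fin k) => banditReward WL WR σ ω i :=
    measurable_pi_lambda _ fun _ => (measurable_pi_apply _).comp
      (measurable_banditReward hWL hWR hσ)
  rw [← map_banditReward_eq_rewardLaw P₀ hP hWL hWR hσ k,
    integral_map hZ.aemeasurable hg.aestronglyMeasurable]

variable [IsProbabilityMeasure P₀] (hWL : Measurable WL) (hWR : Measurable WR)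
  (hσ : ∀ i, Measurable (σ i))
include hWL hWR hσ

lemma rewardLaw_succ (k : ℕ) :
    rewardLaw P₀ WL WR σ (k + 1) =
      (rewardLaw P₀ WL WR σ k ⊗ₘ armKernel (P₀.map WL) (P₀.map WR) (σ k) (hσ k)).map
        fun p => Fin.snoc p.1 p.2 := by
  have hR := measurable_banditRewardFin hWL hWR hσ
  have hG := measurable_prod_ite (hσ k) hWL hWR
  have hsplit : banditRewardFin WL WR σ (k + 1) ∘ (fun p : (Fin k → Ω₀) × Ω₀ => Fin.snoc p.1 p.2) =
      (fun p => Fin.snoc p.1 p.2) ∘ (fun p => (p.1, if σ k p.1 then WL p.2 else WR p.2)) ∘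
        Prod.map (banditRewardFin WL WR σ k) id :=
    funext fun p => banditRewardFin_snoc p.1 p.2
  rw [rewardLaw, pi_succ_eq_map_snoc, Measure.map_map (hR _) (measurable_finSnoc k), hsplit,
    ← Measure.map_map (measurable_finSnoc k) (hG.comp ((hR k).prodMap measurable_id)),
    ← Measure.map_map hG ((hR k).prodMap measurable_id),
    ← Measure.map_prod_map _ _ (hR k) measurable_id, Measure.map_id,
    map_prod_ite_eq_compProd_armKernel _ _ _ hWL hWR]
  rfl

lemma rewardLaw_mem_admissibleLaws : ∀ k, rewardLaw P₀ WL WR σ k ∈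
    admissibleLaws (fun _ => lipschitzDominated (P₀.map WL) (P₀.map WR)) k
  | 0 => rewardLaw_zero P₀
  | k + 1 => by
    have := Measure.isProbabilityMeasure_map (μ := P₀) hWL.aemeasurable
    have := Measure.isProbabilityMeasure_map (μ := P₀) hWR.aemeasurable
    exact ⟨_, rewardLaw_mem_admissibleLaws k, _, inferInstance,
      armKernel_apply_mem_lipschitzDominated (hσ k), rewardLaw_succ P₀ hWL hWR hσ k⟩

lemma integral_rewardLaw_succ {k : ℕ} {g : (Fin (k + 1) → ℝ) → ℝ} (hg : Measurable g) {C : ℝ}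
    (hgC : ∀ x, |g x| ≤ C) :
    ∫ x, g x ∂rewardLaw P₀ WL WR σ (k + 1) =
      ∫ x, (if σ k x then ∫ y, g (Fin.snoc x y) ∂P₀.map WL else ∫ y, g (Fin.snoc x y) ∂P₀.map WR)
        ∂rewardLaw P₀ WL WR σ k := by
  have := Measure.isProbabilityMeasure_map (μ := P₀) hWL.aemeasurable
  have := Measure.isProbabilityMeasure_map (μ := P₀) hWR.aemeasurable
  have : IsProbabilityMeasure (rewardLaw P₀ WL WR σ k) :=
    Measure.isProbabilityMeasure_map (measurable_banditRewardFin hWL hWR hσ k).aemeasurable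
  rw [rewardLaw_succ P₀ hWL hWR hσ, integral_map_snoc_compProd hg hgC]
  refine integral_congr_ae (ae_of_all _ fun x => ?_)
  simp only [armKernel_apply]
  split <;> rfl

end RewardLaw

/-- Induction on the horizon: play optimally for `bellmanStep g` in the first `k` rounds, then
`greedyArm` in round `k`. -/
theorem exists_strategy_integral_rewardLaw_eq_bellmanValue {Ω₀ : Type*} [MeasurableSpace Ω₀]
    (P₀ : Measure Ω₀) [IsProbabilityMeasure P₀] {WL WR : Ω₀ → ℝ} (hWL : Measurable WL)
    (hWR : Measurable WR) :
    ∀ (k : ℕ) {g : (Fin k → ℝ) → ℝ}, Measurable g → ∀ {C : ℝ}, (∀ x, |g x| ≤ C) →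
      ∃ σ : (i : ℕ) → (Fin i → ℝ) → Bool, (∀ i, Measurable (σ i)) ∧
        ∫ x, g x ∂rewardLaw P₀ WL WR σ k = bellmanValue (P₀.map WL) (P₀.map WR) k g
  | 0, g, hg, _, _ => ⟨fun _ _ => true, fun _ => measurable_const, by
      rw [rewardLaw_zero, integral_dirac' _ _ hg.stronglyMeasurable]
      rfl⟩
  | k + 1, g, hg, C, hgC => by
    have := Measure.isProbabilityMeasure_map (μ := P₀) hWL.aemeasurable
    have := Measure.isProbabilityMeasure_map (μ := P₀) hWR.aemeasurable
    obtain ⟨σ, hσ, hσg⟩ := exists_strategy_integral_rewardLaw_eq_bellmanValue P₀ hWL hWR k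
      (measurable_bellmanStep hg) (abs_bellmanStep_le (μ₁ := P₀.map WL) (μ₂ := P₀.map WR) hgC)
    have hσ' : ∀ i, Measurable (Function.update σ k (greedyArm (P₀.map WL) (P₀.map WR) g) i) :=
      fun i => by
        rcases eq_or_ne i k with rfl | hi
        · simpa using measurable_greedyArm hg
        · simpa [Function.update_of_ne hi] using hσ i
    refine ⟨_, hσ', ?_⟩
    rw [integral_rewardLaw_succ P₀ hWL hWR hσ' hg hgC, Function.update_self]
    simp only [ite_greedyArm_eq_bellmanStep]
    rw [rewardLaw_congr P₀ fun j hj => Function.update_of_ne hj.ne _ σ, hσg]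
    rfl

lemma integral_le_bellmanValue_of_mem_kernelSet {μ₁ μ₂ : Measure ℝ} [IsProbabilityMeasure μ₁]
    [IsProbabilityMeasure μ₂] {Q : Measure (ℕ → ℝ)}
    (hQ : Q ∈ kernelSet fun _ => lipschitzDominated μ₁ μ₂) {n : ℕ} {f : (Fin n → ℝ) → ℝ}
    (hf : Measurable f) {C : ℝ} (hfC : ∀ x, |f x| ≤ C) :
    ∫ ω, f (fun i : Fin n => ω i) ∂Q ≤ bellmanValue μ₁ μ₂ n f := by
  rw [← integral_map (measurable_pi_lambda _ fun _ => measurable_pi_apply _).aemeasurable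
    hf.aestronglyMeasurable]
  exact integral_le_bellmanValue (hQ.2 n) hf hfC

lemma map_banditReward_mem_kernelSet {Ω₀ : Type*} [MeasurableSpace Ω₀] (P₀ : Measure Ω₀)
    [IsProbabilityMeasure P₀] {P : Measure (ℕ → Ω₀)} [IsProbabilityMeasure P]
    (hP : ∀ n : ℕ, P.map (fun ω (i : Fin n) => ω i) = Measure.pi (fun _ : Fin n => P₀))
    {WL WR : Ω₀ → ℝ} (hWL : Measurable WL) (hWR : Measurable WR)
    {σ : (i : ℕ) → (Fin i → ℝ) → Bool} (hσ : ∀ i, Measurable (σ i)) :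
    P.map (fun ω i => banditReward WL WR σ ω i) ∈
      kernelSet fun _ => lipschitzDominated (P₀.map WL) (P₀.map WR) := by
  refine ⟨Measure.isProbabilityMeasure_map (measurable_banditReward hWL hWR hσ).aemeasurable,
    fun k => ?_⟩
  rw [Measure.map_map (measurable_pi_lambda _ fun _ => measurable_pi_apply _)
    (measurable_banditReward hWL hWR hσ)]
  exact map_banditReward_eq_rewardLaw P₀ hP hWL hWR hσ k ▸
    rewardLaw_mem_admissibleLaws P₀ hWL hWR hσ k

lemma isGreatest_iSup_of_subset_range {α ι : Type*} [ConditionallyCompleteLattice α]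
    {F : ι → α} {A : Set α} {a : α} (hA : A ⊆ Set.range F) (ha : a ∈ A) (hF : ∀ i, F i ≤ a) :
    IsGreatest A (⨆ i, F i) := by
  have hmax : IsGreatest (Set.range F) a := ⟨hA ha, Set.forall_mem_range.2 hF⟩
  rw [iSup, hmax.csSup_eq]
  exact ⟨ha, fun b hb => hmax.2 (hA hb)⟩

theorem two_armed_bandit_sup_strategies_general
    {Ω₀ : Type*} [MeasurableSpace Ω₀] (P₀ : Measure Ω₀) [IsProbabilityMeasure P₀]
    (WL WR : Ω₀ → ℝ) (hWLm : Measurable WL) (hWRm : Measurable WR)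
    -- `P` is the infinite product of copies of `P₀`
    (P : Measure (ℕ → Ω₀)) (hPprob : IsProbabilityMeasure P)
    (hmarg : ∀ n : ℕ, P.map (fun ω (i : Fin n) => ω i) = Measure.pi (fun _ : Fin n => P₀))
    (𝒫₀ : Set (Measure ℝ))
    (h𝒫₀ : 𝒫₀ = { ν : Measure ℝ | IsProbabilityMeasure ν ∧
      ∀ φ : ℝ → ℝ, (∃ L : ℝ≥0, LipschitzWith L φ) →
        ∫ x, φ x ∂ν ≤ max (∫ ω, φ (WL ω) ∂P₀) (∫ ω, φ (WR ω) ∂P₀) })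
    (n : ℕ)
    (f : (Fin n → ℝ) → ℝ) (hfm : Measurable f) (hfb : ∃ C : ℝ, ∀ x, |f x| ≤ C) :
    IsGreatest
      { r : ℝ | ∃ σ : (i : ℕ) → (Fin i → ℝ) → Bool, (∀ i, Measurable (σ i)) ∧
          r = ∫ ω, f (fun i : Fin n => banditReward WL WR σ ω i) ∂P }
      (⨆ Q : kernelSet fun _ => 𝒫₀,
        ∫ ω, f (fun i : Fin n => ω i) ∂(Q : Measure (ℕ → ℝ))) := by
  obtain ⟨C, hfC⟩ := hfb
  have := Measure.isProbabilityMeasure_map (μ := P₀) hWLm.aemeasurable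
  have := Measure.isProbabilityMeasure_map (μ := P₀) hWRm.aemeasurable
  rw [setOf_lipschitz_integral_comp_le_max_eq P₀ hWLm hWRm] at h𝒫₀
  subst h𝒫₀
  obtain ⟨σ, hσ, hσf⟩ := exists_strategy_integral_rewardLaw_eq_bellmanValue P₀ hWLm hWRm n hfm hfC
  refine isGreatest_iSup_of_subset_range ?_ ⟨σ, hσ, rfl⟩ fun Q => ?_
  · rintro _ ⟨σ, hσ, rfl⟩
    exact ⟨⟨_, map_banditReward_mem_kernelSet P₀ hmarg hWLm hWRm hσ⟩,
      integral_map (measurable_banditReward hWLm hWRm hσ).aemeasurable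
        (hfm.comp (measurable_pi_lambda _ fun _ => measurable_pi_apply _)).aestronglyMeasurable⟩
  · rw [integral_banditReward_eq_integral_rewardLaw P₀ hmarg hWLm hWRm hσ hfm, hσf]
    exact integral_le_bellmanValue_of_mem_kernelSet Q.2 hfm hfC

/-- In the two-armed bandit with i.i.d. payoffs, for every `n` and every
bounded Borel `f : ℝⁿ → ℝ`, the supremum over all strategies of `E_P[f(Z₁,…,Zₙ)]` is
attained and equals `sup_{Q ∈ 𝒫} E_Q[f(X₁,…,Xₙ)]`, where `𝒫` is the kernel-generated set
over the set `𝒫₀` of laws dominated by `φ ↦ max(E[φ(W^L)], E[φ(W^R)])`. -/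
theorem two_armed_bandit_sup_strategies
    {Ω₀ : Type*} [MeasurableSpace Ω₀] (P₀ : Measure Ω₀) [IsProbabilityMeasure P₀]
    (WL WR : Ω₀ → ℝ) (hWLm : Measurable WL) (hWRm : Measurable WR)
    (hWLb : ∃ M : ℝ, ∀ ω, |WL ω| ≤ M) (hWRb : ∃ M : ℝ, ∀ ω, |WR ω| ≤ M)
    -- `P` is the infinite product of copies of `P₀`
    (P : Measure (ℕ → Ω₀)) (hPprob : IsProbabilityMeasure P)
    (hmarg : ∀ n : ℕ, P.map (fun ω (i : Fin n) => ω i) = Measure.pi (fun _ : Fin n => P₀))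
    (𝒫₀ : Set (Measure ℝ))
    (h𝒫₀ : 𝒫₀ = { ν : Measure ℝ | IsProbabilityMeasure ν ∧
      ∀ φ : ℝ → ℝ, (∃ L : ℝ≥0, LipschitzWith L φ) →
        ∫ x, φ x ∂ν ≤ max (∫ ω, φ (WL ω) ∂P₀) (∫ ω, φ (WR ω) ∂P₀) })
    (n : ℕ) (hn : 1 ≤ n)
    (f : (Fin n → ℝ) → ℝ) (hfm : Measurable f) (hfb : ∃ C : ℝ, ∀ x, |f x| ≤ C) :
    IsGreatest
      { r : ℝ | ∃ σ : (i : ℕ) → (Fin i → ℝ) → Bool, (∀ i, Measurable (σ i)) ∧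
          r = ∫ ω, f (fun i : Fin n => banditReward WL WR σ ω i) ∂P }
      (⨆ Q : kernelSet fun _ => 𝒫₀,
        ∫ ω, f (fun i : Fin n => ω i) ∂(Q : Measure (ℕ → ℝ))) :=
  two_armed_bandit_sup_strategies_general P₀ WL WR hWLm hWRm P hPprob hmarg 𝒫₀ h𝒫₀ n f hfm hfb
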